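/- For ρ ∈ (−1, 1) let μ_ρ be the Borel probability measure on ℝ² with density (x, y) ↦ (2π√(1−ρ²))⁻¹ exp(−(x² − 2ρxy + y²)/(2(1−ρ²))) with respect to two-dimensional Lebesgue measure (the centered bivariate Gaussian law with unit variances and correlation ρ). Then μ_ρ({(x, y) ∈ ℝ² : x > 0 and y > 0}) = 1/4 + arcsin(ρ)/(2π). -/

import Mathlib

/-!
With `X`, `Y` independent standard Gaussians, `(X, ρX + √(1 - ρ²)Y)` has law `biGauss ρ`, so the
quadrant probability is the standard Gaussian measure of the preimage of the quadrant under this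
shear. In polar coordinates that preimage is the sector `θ ∈ (-arcsin ρ, π/2)`, and since the
standard Gaussian density on `ℝ²` is radial, a sector of opening `β` has mass `β / 2π`.
-/

open MeasureTheory

/-- The centered bivariate Gaussian measure on `ℝ²` with unit variances and correlation `ρ`,
given by its density with respect to two-dimensional Lebesgue measure. -/
noncomputable def biGauss (ρ : ℝ) : Measure (ℝ × ℝ) :=
  (volume : Measure (ℝ × ℝ)).withDensity fun p =>
    ENNReal.ofReal ((2 * Real.pi * Real.sqrt (1 - ρ ^ 2))⁻¹ *
      Real.exp (-(p.1 ^ 2 - 2 * ρ * p.1 * p.2 + p.2 ^ 2) / (2 * (1 - ρ ^ 2))))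

open ProbabilityTheory Real Set

open scoped ENNReal NNReal

theorem map_linearMap_withDensity_abs_det_mul_comp {E : Type*} [NormedAddCommGroup E]
    [NormedSpace ℝ E] [MeasurableSpace E] [BorelSpace E] [FiniteDimensional ℝ E] (μ : Measure E)
    [μ.IsAddHaarMeasure] {L : E →ₗ[ℝ] E} (hL : LinearMap.det L ≠ 0) {f : E → ℝ≥0∞}
    (hf : Measurable f) :
    (μ.withDensity fun x => ENNReal.ofReal |LinearMap.det L| * f (L x)).map L =
      μ.withDensity f := by
  have hLm : Measurable L := L.continuous_of_finiteDimensional.measurable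
  ext s hs
  rw [Measure.map_apply hLm hs, withDensity_apply _ (hs.preimage hLm), withDensity_apply _ hs,
    ← lintegral_indicator (hs.preimage hLm), ← lintegral_indicator hs]
  calc ∫⁻ x, (L ⁻¹' s).indicator (fun x => ENNReal.ofReal |LinearMap.det L| * f (L x)) x ∂μ
      = ENNReal.ofReal |LinearMap.det L| * ∫⁻ x, s.indicator f (L x) ∂μ := by
        rw [← lintegral_const_mul _ (f := fun x => s.indicator f (L x))
          ((hf.indicator hs).comp hLm)]
        congr 1 with x
        by_cases hx : L x ∈ s <;> simp [indicator, hx]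
    _ = ENNReal.ofReal |LinearMap.det L| * ∫⁻ y, s.indicator f y ∂(μ.map L) := by
        rw [lintegral_map (hf.indicator hs) hLm]
    _ = ∫⁻ y, s.indicator f y ∂μ := by
        rw [Measure.map_linearMap_addHaar_eq_smul_addHaar μ hL, lintegral_smul_measure,
          smul_eq_mul, ← mul_assoc, ← ENNReal.ofReal_mul (abs_nonneg _), abs_inv,
          mul_inv_cancel₀ (abs_ne_zero.2 hL), ENNReal.ofReal_one, one_mul]

theorem gaussianReal_prod_eq_withDensity (m₁ m₂ : ℝ) {v₁ v₂ : ℝ≥0} (hv₁ : v₁ ≠ 0)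
    (hv₂ : v₂ ≠ 0) :
    (gaussianReal m₁ v₁).prod (gaussianReal m₂ v₂) =
      volume.withDensity fun q : ℝ × ℝ => gaussianPDF m₁ v₁ q.1 * gaussianPDF m₂ v₂ q.2 := by
  rw [gaussianReal_of_var_ne_zero m₁ hv₁, gaussianReal_of_var_ne_zero m₂ hv₂,
    prod_withDensity (measurable_gaussianPDF m₁ v₁) (measurable_gaussianPDF m₂ v₂),
    Measure.volume_eq_prod]

theorem gaussianPDF_mul_polar (v : ℝ≥0) (r θ : ℝ) :
    gaussianPDF 0 v (r * cos θ) * gaussianPDF 0 v (r * sin θ) =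
      gaussianPDF 0 v r * gaussianPDF 0 v 0 := by
  simp only [gaussianPDF]
  rw [← ENNReal.ofReal_mul (gaussianPDFReal_nonneg _ _ _),
    ← ENNReal.ofReal_mul (gaussianPDFReal_nonneg _ _ _)]
  congr 1
  simp only [gaussianPDFReal]
  rw [mul_mul_mul_comm, mul_mul_mul_comm _ (rexp _), ← exp_add, ← exp_add]
  congr 2
  linear_combination (-(r ^ 2) / (2 * v)) * sin_sq_add_cos_sq θ

theorem gaussianReal_prod_sector_eq_mul {v : ℝ≥0} (hv : v ≠ 0) {C : Set (ℝ × ℝ)}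
    (hC : MeasurableSet C) {a b : ℝ} (ha : -π ≤ a) (hb : b ≤ π)
    (hCab : ∀ r > 0, ∀ θ ∈ Ioo (-π) π, (r * cos θ, r * sin θ) ∈ C ↔ θ ∈ Ioo a b) :
    (gaussianReal 0 v).prod (gaussianReal 0 v) C =
      (∫⁻ r in Ioi 0, ENNReal.ofReal r * (gaussianPDF 0 v r * gaussianPDF 0 v 0)) *
        ENNReal.ofReal (b - a) := by
  set F : ℝ → ℝ≥0∞ := fun r => ENNReal.ofReal r * (gaussianPDF 0 v r * gaussianPDF 0 v 0)
  have hsector : MeasurableSet (Ioi (0 : ℝ) ×ˢ Ioo a b) := measurableSet_Ioi.prod measurableSet_Ioo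
  have hpolar : EqOn (fun p => ENNReal.ofReal p.1 • C.indicator
        (fun q : ℝ × ℝ => gaussianPDF 0 v q.1 * gaussianPDF 0 v q.2) (polarCoord.symm p))
      ((Ioi 0 ×ˢ Ioo a b).indicator fun p => F p.1) polarCoord.target := by
    rintro ⟨r, θ⟩ ⟨hr, hθ⟩
    simp only [polarCoord_symm_apply, indicator, mem_prod, hCab r hr θ hθ, smul_eq_mul]
    split_ifs with h₁ h₂ h₂
    · rw [gaussianPDF_mul_polar]
    · exact absurd ⟨hr, h₁⟩ h₂
    · exact absurd h₂.2 h₁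
    · simp
  calc (gaussianReal 0 v).prod (gaussianReal 0 v) C
      = ∫⁻ q, C.indicator (fun q : ℝ × ℝ => gaussianPDF 0 v q.1 * gaussianPDF 0 v q.2) q := by
        rw [gaussianReal_prod_eq_withDensity 0 0 hv hv, withDensity_apply _ hC,
          lintegral_indicator hC]
    _ = ∫⁻ p in Ioi 0 ×ˢ Ioo a b, F p.1 := by
        rw [← lintegral_comp_polarCoord_symm, setLIntegral_congr_fun
          polarCoord.open_target.measurableSet hpolar, lintegral_indicator hsector,
          Measure.restrict_restrict hsector, inter_eq_left.2]
        exact prod_mono subset_rfl (Ioo_subset_Ioo ha hb)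
    _ = (∫⁻ r in Ioi 0, F r) * ENNReal.ofReal (b - a) := by
        rw [Measure.volume_eq_prod, ← Measure.prod_restrict]
        have hF : Measurable F :=
          ENNReal.measurable_ofReal.mul ((measurable_gaussianPDF 0 v).mul_const _)
        have hprod := lintegral_prod_mul (μ := volume.restrict (Ioi 0))
          (ν := volume.restrict (Ioo a b)) hF.aemeasurable (aemeasurable_const (b := (1 : ℝ≥0∞)))
        simp only [mul_one] at hprod
        rw [hprod, lintegral_one, Measure.restrict_apply_univ, Real.volume_Ioo]

theorem gaussianReal_prod_sector {v : ℝ≥0} (hv : v ≠ 0) {C : Set (ℝ × ℝ)}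
    (hC : MeasurableSet C) {a b : ℝ} (ha : -π ≤ a) (hb : b ≤ π)
    (hCab : ∀ r > 0, ∀ θ ∈ Ioo (-π) π, (r * cos θ, r * sin θ) ∈ C ↔ θ ∈ Ioo a b) :
    (gaussianReal 0 v).prod (gaussianReal 0 v) C = ENNReal.ofReal ((b - a) / (2 * π)) := by
  -- The radial integral is never computed: the whole plane is the sector `(-π, π)`, of mass `1`.
  have hmass := gaussianReal_prod_sector_eq_mul hv MeasurableSet.univ le_rfl le_rfl
    fun r _ θ hθ => iff_of_true (mem_univ _) hθ
  rw [measure_univ, sub_neg_eq_add, ← two_mul, eq_comm] at hmass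
  rw [gaussianReal_prod_sector_eq_mul hv hC ha hb hCab, ENNReal.eq_inv_of_mul_eq_one_left hmass,
    ENNReal.ofReal_div_of_pos (by positivity), div_eq_mul_inv, mul_comm]

noncomputable def correlationMap (ρ : ℝ) : ℝ × ℝ →ₗ[ℝ] ℝ × ℝ :=
  Matrix.toLin (Module.Basis.finTwoProd ℝ) (Module.Basis.finTwoProd ℝ) !![1, 0; ρ, √(1 - ρ ^ 2)]

theorem correlationMap_apply (ρ : ℝ) (q : ℝ × ℝ) :
    correlationMap ρ q = (q.1, ρ * q.1 + √(1 - ρ ^ 2) * q.2) := by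
  simp [correlationMap, Matrix.toLin_finTwoProd_apply]

theorem det_correlationMap (ρ : ℝ) : LinearMap.det (correlationMap ρ) = √(1 - ρ ^ 2) := by
  simp [correlationMap, LinearMap.det_toLin, Matrix.det_fin_two_of]

theorem biGauss_eq_map {ρ : ℝ} (hρ₁ : -1 < ρ) (hρ₂ : ρ < 1) :
    biGauss ρ = ((gaussianReal 0 1).prod (gaussianReal 0 1)).map (correlationMap ρ) := by
  have hρ : 0 < 1 - ρ ^ 2 := by nlinarith
  have hc : 0 < √(1 - ρ ^ 2) := sqrt_pos.2 hρ
  rw [biGauss, gaussianReal_prod_eq_withDensity 0 0 one_ne_zero one_ne_zero,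
    ← map_linearMap_withDensity_abs_det_mul_comp volume (by rw [det_correlationMap]; exact hc.ne')
      (by fun_prop)]
  congr 2 with q
  rw [det_correlationMap, abs_of_pos hc, correlationMap_apply, ← ENNReal.ofReal_mul hc.le]
  simp only [gaussianPDF]
  rw [← ENNReal.ofReal_mul (gaussianPDFReal_nonneg _ _ _)]
  congr 1
  simp only [gaussianPDFReal, NNReal.coe_one]
  have hquad : -(q.1 ^ 2 - 2 * ρ * q.1 * (ρ * q.1 + √(1 - ρ ^ 2) * q.2)
        + (ρ * q.1 + √(1 - ρ ^ 2) * q.2) ^ 2) / (2 * (1 - ρ ^ 2))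
      = -(q.1 - 0) ^ 2 / (2 * 1) + -(q.2 - 0) ^ 2 / (2 * 1) := by
    field_simp
    linear_combination (-(q.2 ^ 2)) * sq_sqrt hρ.le
  have hconst : √(1 - ρ ^ 2) * (2 * π * √(1 - ρ ^ 2))⁻¹ = (√(2 * π * 1))⁻¹ * (√(2 * π * 1))⁻¹ := by
    rw [mul_one, ← mul_inv, mul_self_sqrt (by positivity)]
    field_simp
  rw [hquad, exp_add, ← mul_assoc, hconst]
  ring

theorem correlationMap_polar {ρ : ℝ} (hρ₁ : -1 ≤ ρ) (hρ₂ : ρ ≤ 1) (r θ : ℝ) :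
    correlationMap ρ (r * cos θ, r * sin θ) = (r * cos θ, r * sin (θ + arcsin ρ)) := by
  rw [correlationMap_apply, sin_add, sin_arcsin hρ₁ hρ₂, cos_arcsin]
  congr 1
  ring

theorem cos_pos_and_sin_add_pos_iff {α θ : ℝ} (hα : α ∈ Ioo (-(π / 2)) (π / 2))
    (hθ : θ ∈ Ioo (-π) π) : 0 < cos θ ∧ 0 < sin (θ + α) ↔ θ ∈ Ioo (-α) (π / 2) := by
  obtain ⟨hα₁, hα₂⟩ := hα
  obtain ⟨hθ₁, hθ₂⟩ := hθ
  constructor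
  · rintro ⟨hcos, hsin⟩
    have hθ_lt : θ < π / 2 := by
      by_contra! h
      linarith [cos_nonpos_of_pi_div_two_le_of_le h (by linarith)]
    have hθ_gt : -(π / 2) < θ := by
      by_contra! h
      linarith [cos_neg θ ▸ cos_nonpos_of_pi_div_two_le_of_le (x := -θ) (by linarith) (by linarith)]
    refine ⟨?_, hθ_lt⟩
    by_contra! h
    linarith [sin_nonpos_of_nonpos_of_neg_pi_le (x := θ + α) (by linarith) (by linarith)]
  · rintro ⟨h₁, h₂⟩
    exact ⟨cos_pos_of_mem_Ioo ⟨by linarith, h₂⟩,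
      sin_pos_of_pos_of_lt_pi (by linarith) (by linarith)⟩

/-- Sheppard's formula: for a centered bivariate Gaussian vector with unit variances and
correlation `ρ ∈ (−1, 1)`, the probability of the positive quadrant equals
`1/4 + arcsin(ρ)/(2π)`. -/
theorem stmt17 (ρ : ℝ) (hρ₁ : -1 < ρ) (hρ₂ : ρ < 1) :
    biGauss ρ {p : ℝ × ℝ | 0 < p.1 ∧ 0 < p.2} =
      ENNReal.ofReal (1 / 4 + Real.arcsin ρ / (2 * Real.pi)) := by
  have hα : arcsin ρ ∈ Ioo (-(π / 2)) (π / 2) :=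
    ⟨neg_pi_div_two_lt_arcsin.2 hρ₁, arcsin_lt_pi_div_two.2 hρ₂⟩
  have hQ : MeasurableSet {p : ℝ × ℝ | 0 < p.1 ∧ 0 < p.2} :=
    (measurableSet_lt measurable_const measurable_fst).inter
      (measurableSet_lt measurable_const measurable_snd)
  have hL : Measurable (correlationMap ρ) :=
    (correlationMap ρ).continuous_of_finiteDimensional.measurable
  rw [biGauss_eq_map hρ₁ hρ₂, Measure.map_apply hL hQ,
    gaussianReal_prod_sector one_ne_zero (a := -arcsin ρ) (b := π / 2) (hQ.preimage hL)
      (by linarith [hα.2, pi_pos]) (by linarith [pi_pos])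
      fun r hr θ hθ => ?_]
  · congr 1
    field_simp
    ring
  · simp only [mem_preimage, mem_ofPred_eq, correlationMap_polar hρ₁.le hρ₂.le,
      mul_pos_iff_of_pos_left hr]
    exact cos_pos_and_sin_add_pos_iff hα hθ
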